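/- Let f : [0, L] → ℝ be continuous and piecewise linear on the partition 0 = x₀ < x₁ < ... < x_{N+1} = L with uniform step x_{i+1} − x_i = h/2, and suppose f(x₀) = f(x_{N+1}) = 0. Then ∫₀ᴸ f(x)² dx ≤ (h/2)·∑_{i=1}^{N} f(x_i)². -/
import Mathlib

lemma affine_integral (m b a c : ℝ) :
    ∫ x in a..c, (m*x+b)^2
      = m^2 * ((c^3 - a^3)/3) + 2*m*b*((c^2 - a^2)/2) + b^2*(c-a) := by
  have h1 : ∫ x in a..c, (m*x+b)^2
      = ∫ x in a..c, (m^2*x^2 + (2*m*b)*x + b^2) := by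
    apply intervalIntegral.integral_congr
    intro x _; ring
  rw [h1]
  have i1 : IntervalIntegrable (fun x : ℝ => m^2*x^2) MeasureTheory.volume a c :=
    (by continuity : Continuous fun x : ℝ => m^2*x^2).intervalIntegrable a c
  have i2 : IntervalIntegrable (fun x : ℝ => (2*m*b)*x) MeasureTheory.volume a c :=
    (by continuity : Continuous fun x : ℝ => (2*m*b)*x).intervalIntegrable a c
  have i3 : IntervalIntegrable (fun _ : ℝ => b^2) MeasureTheory.volume a c :=
    intervalIntegrable_const
  rw [intervalIntegral.integral_add (i1.add i2) i3, intervalIntegral.integral_add i1 i2,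
    intervalIntegral.integral_const_mul, intervalIntegral.integral_const_mul,
    intervalIntegral.integral_const]
  have p2 : ∫ x in a..c, x^2 = (c^3 - a^3)/3 := by
    rw [integral_pow]; norm_num
  have p1 : ∫ x in a..c, x = (c^2 - a^2)/2 := by
    rw [integral_id]
  rw [p2, p1, smul_eq_mul]; ring

lemma affine_sq_bound (m b a d : ℝ) (hd : 0 ≤ d) :
    ∫ x in a..(a+d), (m*x+b)^2 ≤ d/2 * ((m*a+b)^2 + (m*(a+d)+b)^2) := by
  rw [affine_integral]
  nlinarith [sq_nonneg (m*d), mul_nonneg hd (sq_nonneg (m*d))]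

/-- Quadrature bound for a continuous piecewise linear function vanishing at the endpoints
of a uniform partition of `[0, L]` with step `h/2`:
`∫₀ᴸ f² ≤ (h/2) ∑_{i=1}^{N} f(x_i)²`. -/
theorem integral_sq_le_trapezoidal (N : ℕ) (h L : ℝ) (hh : 0 < h)
    (hL : L = (N + 1 : ℝ) * (h / 2)) (f : ℝ → ℝ)
    (hcont : ContinuousOn f (Set.Icc 0 L))
    (hpl : ∀ i : ℕ, i ≤ N → ∃ m b : ℝ, ∀ x ∈ Set.Icc ((i : ℝ) * (h / 2)) ((i + 1 : ℝ) * (h / 2)),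
      f x = m * x + b)
    (h0 : f 0 = 0) (hend : f L = 0) :
    ∫ x in (0 : ℝ)..L, (f x) ^ 2 ≤ h / 2 * ∑ i ∈ Finset.Icc 1 N, (f ((i : ℝ) * (h / 2))) ^ 2 := by
  set d : ℝ := h / 2 with hd
  have hd0 : 0 < d := by positivity
  set a : ℕ → ℝ := fun i => (i : ℝ) * d with ha
  have hsub : ∀ i : ℕ, i ≤ N → Set.uIcc (a i) (a (i+1)) ⊆ Set.Icc 0 L := by
    intro i hi
    rw [Set.uIcc_of_le (by
      simp only [ha]
      have : (i : ℝ) ≤ (i : ℝ) + 1 := by linarith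
      push_cast
      nlinarith)]
    apply Set.Icc_subset_Icc
    · simp only [ha]; positivity
    · simp only [ha, hL]; push_cast
      have : (i : ℝ) + 1 ≤ (N : ℝ) + 1 := by
        have := (Nat.cast_le (α := ℝ)).mpr hi; linarith
      nlinarith
  have hint : ∀ i : ℕ, i ≤ N →
      IntervalIntegrable (fun x => (f x)^2) MeasureTheory.volume (a i) (a (i+1)) := by
    intro i hi
    exact ((hcont.mono (hsub i hi)).pow 2).intervalIntegrable
  have hsplit : ∫ x in (0:ℝ)..L, (f x)^2 = ∑ i ∈ Finset.range (N+1), ∫ x in a i..a (i+1), (f x)^2 := by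
    have := intervalIntegral.sum_integral_adjacent_intervals (μ := MeasureTheory.volume)
      (a := a) (n := N+1) (f := fun x => (f x)^2)
      (fun i hi => hint i (Nat.lt_succ_iff.mp hi))
    rw [this]
    simp only [ha]
    norm_num [hL]
  rw [hsplit]
  have hbound : ∀ i ∈ Finset.range (N+1),
      ∫ x in a i..a (i+1), (f x)^2 ≤ d/2 * ((f (a i))^2 + (f (a (i+1)))^2) := by
    intro i hi
    have hi' : i ≤ N := Nat.lt_succ_iff.mp (Finset.mem_range.mp hi)
    obtain ⟨m, b, hmb⟩ := hpl i hi'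
    have hIcc : Set.Icc ((i:ℝ)*d) (((i:ℝ)+1)*d) = Set.uIcc (a i) (a (i+1)) := by
      rw [Set.uIcc_of_le]
      · simp only [ha]; push_cast; ring_nf
      · simp only [ha]; push_cast; nlinarith
    have hcg : ∫ x in a i..a (i+1), (f x)^2 = ∫ x in a i..a (i+1), (m*x+b)^2 := by
      apply intervalIntegral.integral_congr
      intro x hx
      have hx' : x ∈ Set.Icc ((i:ℝ)*d) (((i:ℝ)+1)*d) := by rw [hIcc]; exact hx
      show f x ^ 2 = (m*x+b)^2
      rw [hmb x hx']
    rw [hcg]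
    have hstep : a (i+1) = a i + d := by simp only [ha]; push_cast; ring
    have hfa : f (a i) = m * (a i) + b := by
      apply hmb
      rw [hIcc]; exact Set.left_mem_uIcc
    have hfb : f (a (i+1)) = m * (a i + d) + b := by
      rw [← hstep]
      apply hmb
      rw [hIcc]; exact Set.right_mem_uIcc
    rw [hfa, hfb, hstep]
    exact affine_sq_bound m b (a i) d hd0.le
  calc ∑ i ∈ Finset.range (N+1), ∫ x in a i..a (i+1), (f x)^2
      ≤ ∑ i ∈ Finset.range (N+1), d/2 * ((f (a i))^2 + (f (a (i+1)))^2) :=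
        Finset.sum_le_sum hbound
    _ = d * ∑ i ∈ Finset.Icc 1 N, (f ((i : ℝ) * d))^2 := by
        set g : ℕ → ℝ := fun i => (f (a i))^2 with hg
        have hsum : ∑ i ∈ Finset.range (N+1), d/2 * (g i + g (i+1))
            = d/2 * (∑ i ∈ Finset.range (N+1), g i + ∑ i ∈ Finset.range (N+1), g (i+1)) := by
          rw [← Finset.sum_add_distrib, Finset.mul_sum]
        have hg0 : g 0 = 0 := by simp [hg, ha, h0]
        have hgN : g (N+1) = 0 := by
          simp only [hg, ha]
          rw [show ((N+1 : ℕ) : ℝ) * d = L by rw [hL]; push_cast; ring, hend]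
          norm_num
        have e1 : ∑ i ∈ Finset.range (N+1), g i = ∑ i ∈ Finset.range N, g (i+1) := by
          rw [Finset.sum_range_succ' g N, hg0, add_zero]
        have e2 : ∑ i ∈ Finset.range (N+1), g (i+1) = ∑ i ∈ Finset.range N, g (i+1) := by
          rw [Finset.sum_range_succ, hgN, add_zero]
        have e3 : ∑ i ∈ Finset.Icc 1 N, (f ((i : ℝ) * d))^2 = ∑ i ∈ Finset.range N, g (i+1) := by
          rw [← Finset.Ico_add_one_right_eq_Icc, Finset.sum_Ico_eq_sum_range]
          simp only [hg, ha, Nat.add_sub_cancel]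
          apply Finset.sum_congr rfl
          intro i _
          push_cast
          ring_nf
        rw [hsum, hg0] at *
        rw [hsum, e1, e2, e3]
        ring
    _ = h / 2 * ∑ i ∈ Finset.Icc 1 N, (f ((i : ℝ) * (h/2)))^2 := by rw [hd]
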